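/- Consider a binary memoryless source on {0,1}^n with unknown parameter p = P(1). The interleaved guessing list G that alternates between the two monotone orders (decreasing number of 1s, and increasing number of 1s), skipping duplicates, satisfies G(x^n) ≤ 2 G_{P_n}(x^n) for every x^n ∈ {0,1}^n and every p ∈ [0,1], where G_{P_n} is an optimal guessing list for the product PMF P_n. Consequently, for every ρ > 0, the guessing redundancy R(P_n, G) = (1/ρ) log E[G(X^n)^ρ] − (1/ρ) log E[G_{P_n}(X^n)^ρ] is at most log 2. -/

import Mathlib

open Real Finset

/-- Number of 1s (trues) in a binary string. -/
def numOnes {n : ℕ} (x : Fin n → Bool) : ℕ :=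
  (Finset.univ.filter fun i => x i).card

/-- The product PMF of a binary memoryless source with parameter `p`. -/
noncomputable def binPMF (n : ℕ) (p : ℝ) (x : Fin n → Bool) : ℝ :=
  p ^ numOnes x * (1 - p) ^ (n - numOnes x)

lemma numOnes_le {n : ℕ} (x : Fin n → Bool) : numOnes x ≤ n := by
  classical
  unfold numOnes
  exact (Finset.card_filter_le _ _).trans (by simp)

/-- monotonicity of `p^k (1-p)^(n-k)` in `k` when `1-p ≤ p`. -/
lemma pow_prob_mono (p : ℝ) (hp0 : 0 ≤ p) (hp1 : p ≤ 1) (hh : 1 - p ≤ p)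
    {k l n : ℕ} (hkl : k ≤ l) (hln : l ≤ n) :
    p ^ k * (1 - p) ^ (n - k) ≤ p ^ l * (1 - p) ^ (n - l) := by
  have h2 : (0:ℝ) ≤ 1 - p := by linarith
  have hnk : n - k = (n - l) + (l - k) := by omega
  have hl' : l = k + (l - k) := by omega
  have key : (1 - p) ^ (l - k) ≤ p ^ (l - k) := pow_le_pow_left₀ h2 hh _
  calc p ^ k * (1 - p) ^ (n - k)
      = (p ^ k * (1 - p) ^ (n - l)) * (1 - p) ^ (l - k) := by
        rw [hnk, pow_add]; ring
    _ ≤ (p ^ k * (1 - p) ^ (n - l)) * p ^ (l - k) := by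
        apply mul_le_mul_of_nonneg_left key
        exact mul_nonneg (pow_nonneg hp0 _) (pow_nonneg h2 _)
    _ = p ^ l * (1 - p) ^ (n - l) := by
        have hpl : p ^ l = p ^ k * p ^ (l - k) := by
          rw [← pow_add, Nat.add_sub_cancel' hkl]
        rw [hpl]; ring

lemma binPMF_mono_ge_half {n : ℕ} {p : ℝ} (hp0 : 0 ≤ p) (hp1 : p ≤ 1)
    (hh : 1 - p ≤ p) {x y : Fin n → Bool} (h : numOnes x ≤ numOnes y) :
    binPMF n p x ≤ binPMF n p y :=
  pow_prob_mono p hp0 hp1 hh h (numOnes_le y)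

lemma binPMF_mono_le_half {n : ℕ} {p : ℝ} (hp0 : 0 ≤ p) (hp1 : p ≤ 1)
    (hh : p ≤ 1 - p) {x y : Fin n → Bool} (h : numOnes y ≤ numOnes x) :
    binPMF n p x ≤ binPMF n p y := by
  have hx := numOnes_le x
  have hy := numOnes_le y
  have := pow_prob_mono (1 - p) (by linarith) (by linarith) (by linarith)
    (k := n - numOnes x) (l := n - numOnes y) (n := n) (by omega) (by omega)
  have e1 : 1 - (1 - p) = p := by ring
  rw [e1] at this
  have e2 : n - (n - numOnes x) = numOnes x := by omega
  have e3 : n - (n - numOnes y) = numOnes y := by omega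
  rw [e2, e3] at this
  unfold binPMF
  linarith [this]

section keyRank

variable (n : ℕ)

/-- key for sorting by increasing number of ones, with injective tiebreak -/
noncomputable def keyFn (x : Fin n → Bool) : ℕ :=
  numOnes x * Fintype.card (Fin n → Bool) + (Fintype.equivFin (Fin n → Bool) x : ℕ)

lemma keyFn_inj : Function.Injective (keyFn n) := by
  intro x y h
  have hx : (Fintype.equivFin (Fin n → Bool) x : ℕ) < Fintype.card (Fin n → Bool) :=
    (Fintype.equivFin _ x).isLt
  have hy : (Fintype.equivFin (Fin n → Bool) y : ℕ) < Fintype.card (Fin n → Bool) :=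
    (Fintype.equivFin _ y).isLt
  have hmod : (Fintype.equivFin (Fin n → Bool) x : ℕ) = (Fintype.equivFin (Fin n → Bool) y : ℕ) := by
    have h2 := congrArg (· % Fintype.card (Fin n → Bool)) h
    simp only [keyFn] at h2
    rw [add_comm (numOnes x * _), add_comm (numOnes y * _),
      Nat.add_mul_mod_self_right, Nat.add_mul_mod_self_right] at h2
    rwa [Nat.mod_eq_of_lt hx, Nat.mod_eq_of_lt hy] at h2
  exact (Fintype.equivFin (Fin n → Bool)).injective (Fin.val_injective hmod)

lemma keyFn_lt_of_numOnes_lt {x y : Fin n → Bool} (h : numOnes x < numOnes y) :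
    keyFn n x < keyFn n y := by
  have hx : (Fintype.equivFin (Fin n → Bool) x : ℕ) < Fintype.card (Fin n → Bool) :=
    (Fintype.equivFin _ x).isLt
  have h1 : (numOnes x + 1) * Fintype.card (Fin n → Bool)
      ≤ numOnes y * Fintype.card (Fin n → Bool) := Nat.mul_le_mul_right _ h
  rw [Nat.succ_mul] at h1
  unfold keyFn
  omega

noncomputable def rankFn (x : Fin n → Bool) : ℕ :=
  (Finset.univ.filter fun y => keyFn n y < keyFn n x).card

lemma rankFn_lt (x : Fin n → Bool) : rankFn n x < Fintype.card (Fin n → Bool) := by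
  classical
  have hx : x ∉ Finset.univ.filter fun y => keyFn n y < keyFn n x := by simp
  have hne : (Finset.univ.filter fun y => keyFn n y < keyFn n x) ≠ Finset.univ := by
    intro h
    exact hx (by rw [h]; exact Finset.mem_univ x)
  exact (Finset.card_lt_iff_ne_univ _).mpr hne

lemma rankFn_strictMono {x y : Fin n → Bool} (h : keyFn n x < keyFn n y) :
    rankFn n x < rankFn n y := by
  classical
  apply Finset.card_lt_card
  rw [Finset.ssubset_def]
  constructor
  · intro z hz
    simp only [Finset.mem_filter, Finset.mem_univ, true_and] at hz ⊢
    omega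
  · intro hsub
    have := hsub (by simp [h] : x ∈ Finset.univ.filter fun z => keyFn n z < keyFn n y)
    simp at this

noncomputable def GincE : (Fin n → Bool) ≃ Fin (Fintype.card (Fin n → Bool)) :=
  Equiv.ofBijective (fun x => ⟨rankFn n x, rankFn_lt n x⟩)
    ((Fintype.bijective_iff_injective_and_card _).mpr
      ⟨by
        intro x y h
        by_contra hne
        have hk : keyFn n x ≠ keyFn n y := fun hk => hne (keyFn_inj n hk)
        have hv : rankFn n x = rankFn n y := congrArg Fin.val h
        rcases hk.lt_or_gt with h' | h'
        · exact absurd hv (Nat.ne_of_lt (rankFn_strictMono n h'))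
        · exact absurd hv.symm (Nat.ne_of_lt (rankFn_strictMono n h')), by simp⟩)

lemma GincE_val (x : Fin n → Bool) : (GincE n x : ℕ) = rankFn n x := rfl

lemma GincE_mono {x y : Fin n → Bool} (h : numOnes x < numOnes y) :
    (GincE n x : ℕ) < (GincE n y : ℕ) := by
  rw [GincE_val, GincE_val]
  exact rankFn_strictMono n (keyFn_lt_of_numOnes_lt n h)

end keyRank

section interleave

variable (N : ℕ)

def itlF (k : Fin N) : Fin N :=
  if h : 2 * (k : ℕ) < N then ⟨2 * k, h⟩
  else ⟨2 * (N - 1 - (k : ℕ)) + 1, by have := k.isLt; omega⟩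

lemma itlF_inj : Function.Injective (itlF N) := by
  intro a b hab
  have ha := a.isLt
  have hb := b.isLt
  unfold itlF at hab
  apply Fin.ext
  split_ifs at hab with h1 h2 h2 <;>
    (have := congrArg Fin.val hab; simp only [] at this; omega)

noncomputable def itlE : Fin N ≃ Fin N :=
  Equiv.ofBijective (itlF N) (Finite.injective_iff_bijective.mp (itlF_inj N))

lemma itlE_val (k : Fin N) : (itlE N k : ℕ) =
    if 2 * (k : ℕ) < N then 2 * (k : ℕ) else 2 * (N - 1 - (k : ℕ)) + 1 := by
  show (itlF N k : ℕ) = _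
  unfold itlF
  split_ifs <;> rfl

lemma itlE_le_inc (k : Fin N) : (itlE N k : ℕ) + 1 ≤ 2 * ((k : ℕ) + 1) := by
  rw [itlE_val]
  have := k.isLt
  split_ifs with h <;> omega

lemma itlE_le_dec (k : Fin N) : (itlE N k : ℕ) + 1 ≤ 2 * ((N - 1 - (k : ℕ)) + 1) := by
  rw [itlE_val]
  have := k.isLt
  split_ifs with h <;> omega

end interleave

/-- the key analytic bound -/
lemma sum_log_bound {α : Type*} [Fintype α] (P : α → ℝ) (hP : ∀ x, 0 ≤ P x)
    (x0 : α) (hx0 : 0 < P x0) (a b : α → ℕ)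
    (hab : ∀ x, a x + 1 ≤ 2 * (b x + 1)) (ρ : ℝ) (hρ : 0 < ρ) :
    (1 / ρ) * Real.log (∑ x, P x * ((a x : ℝ) + 1) ^ ρ)
      - (1 / ρ) * Real.log (∑ x, P x * ((b x : ℝ) + 1) ^ ρ) ≤ Real.log 2 := by
  set A := ∑ x, P x * ((a x : ℝ) + 1) ^ ρ with hA
  set B := ∑ x, P x * ((b x : ℝ) + 1) ^ ρ with hB
  have hAB : A ≤ (2 : ℝ) ^ ρ * B := by
    rw [hA, hB, Finset.mul_sum]
    apply Finset.sum_le_sum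
    intro x _
    have hbase : ((a x : ℝ) + 1) ≤ 2 * ((b x : ℝ) + 1) := by exact_mod_cast hab x
    have h1 : ((a x : ℝ) + 1) ^ ρ ≤ (2 * ((b x : ℝ) + 1)) ^ ρ :=
      Real.rpow_le_rpow (by positivity) hbase hρ.le
    have h2 : (2 * ((b x : ℝ) + 1)) ^ ρ = (2 : ℝ) ^ ρ * ((b x : ℝ) + 1) ^ ρ :=
      Real.mul_rpow (by norm_num) (by positivity)
    calc P x * ((a x : ℝ) + 1) ^ ρ ≤ P x * ((2 * ((b x : ℝ) + 1)) ^ ρ) :=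
          mul_le_mul_of_nonneg_left h1 (hP x)
      _ = (2 : ℝ) ^ ρ * (P x * ((b x : ℝ) + 1) ^ ρ) := by rw [h2]; ring
  have hApos : 0 < A := by
    apply Finset.sum_pos'
    · intro x _
      exact mul_nonneg (hP x) (Real.rpow_nonneg (by positivity) ρ)
    · exact ⟨x0, Finset.mem_univ x0,
        mul_pos hx0 (Real.rpow_pos_of_pos (by positivity) ρ)⟩
  have hBpos : 0 < B := by
    apply Finset.sum_pos'
    · intro x _
      exact mul_nonneg (hP x) (Real.rpow_nonneg (by positivity) ρ)
    · exact ⟨x0, Finset.mem_univ x0,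
        mul_pos hx0 (Real.rpow_pos_of_pos (by positivity) ρ)⟩
  have h2ρ : (0 : ℝ) < (2 : ℝ) ^ ρ := Real.rpow_pos_of_pos (by norm_num) ρ
  have hlog : Real.log A ≤ Real.log ((2 : ℝ) ^ ρ * B) :=
    Real.log_le_log hApos hAB
  rw [Real.log_mul (ne_of_gt h2ρ) (ne_of_gt hBpos), Real.log_rpow (by norm_num)] at hlog
  have hρ' : (0 : ℝ) < 1 / ρ := by positivity
  have hm : (1 / ρ) * Real.log A ≤ (1 / ρ) * (ρ * Real.log 2 + Real.log B) :=
    mul_le_mul_of_nonneg_left hlog hρ'.le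
  have he : (1 / ρ) * (ρ * Real.log 2 + Real.log B) - (1 / ρ) * Real.log B = Real.log 2 := by
    field_simp
    ring
  linarith

/-- there is a guessing list `G` on `{0,1}^n`, obtained by
interleaving the two monotone orders (decreasing / increasing number of 1s,
skipping duplicates), such that for every parameter `p ∈ [0,1]` there is an
optimal guessing list `G_{P_n}` for the product PMF with `G(x) ≤ 2 G_{P_n}(x)`
for all `x`; consequently for every `ρ > 0` the guessing redundancy
`(1/ρ) log E[G^ρ] - (1/ρ) log E[G_{P_n}^ρ]` is at most `log 2`. -/
theorem binary_memoryless_interleaved_guessing (n : ℕ) :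
    ∃ G : (Fin n → Bool) ≃ Fin (Fintype.card (Fin n → Bool)),
      (∃ Gdec Ginc : (Fin n → Bool) ≃ Fin (Fintype.card (Fin n → Bool)),
        (∀ x y, numOnes x > numOnes y → (Gdec x : ℕ) < (Gdec y : ℕ)) ∧
        (∀ x y, numOnes x < numOnes y → (Ginc x : ℕ) < (Ginc y : ℕ)) ∧
        (∀ x, (G x : ℕ) + 1 ≤ 2 * ((Gdec x : ℕ) + 1)
            ∧ (G x : ℕ) + 1 ≤ 2 * ((Ginc x : ℕ) + 1))) ∧
      ∀ p : ℝ, 0 ≤ p → p ≤ 1 →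
        ∃ GP : (Fin n → Bool) ≃ Fin (Fintype.card (Fin n → Bool)),
          (∀ x y, binPMF n p x > binPMF n p y → (GP x : ℕ) < (GP y : ℕ)) ∧
          (∀ x, (G x : ℕ) + 1 ≤ 2 * ((GP x : ℕ) + 1)) ∧
          ∀ ρ : ℝ, 0 < ρ →
            (1 / ρ) * Real.log (∑ x, binPMF n p x * ((G x : ℕ) + 1 : ℝ) ^ ρ)
              - (1 / ρ) * Real.log (∑ x, binPMF n p x * ((GP x : ℕ) + 1 : ℝ) ^ ρ)
            ≤ Real.log 2 := by
  classical
  set N := Fintype.card (Fin n → Bool) with hN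
  refine ⟨(GincE n).trans (itlE N), ⟨(GincE n).trans (Fin.revPerm), GincE n, ?_, ?_, ?_⟩, ?_⟩
  · -- Gdec decreasing
    intro x y h
    show ((Fin.rev (GincE n x)) : ℕ) < ((Fin.rev (GincE n y)) : ℕ)
    have h1 : GincE n y < GincE n x := by
      rw [Fin.lt_def]; exact GincE_mono n h
    exact Fin.lt_def.mp (Fin.rev_lt_rev.mpr h1)
  · -- Ginc increasing
    intro x y h
    exact GincE_mono n h
  · -- interleaving bounds
    intro x
    have hdval : (((GincE n).trans Fin.revPerm) x : ℕ) = N - 1 - (GincE n x : ℕ) := by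
      show ((Fin.rev (GincE n x)) : ℕ) = _
      rw [Fin.val_rev]
      have := (GincE n x).isLt
      omega
    constructor
    · rw [hdval]
      exact itlE_le_dec N (GincE n x)
    · exact itlE_le_inc N (GincE n x)
  · -- per-parameter optimal list
    intro p hp0 hp1
    rcases le_or_gt p (1/2) with hhalf | hhalf
    · -- p ≤ 1/2 : use increasing order
      refine ⟨GincE n, ?_, ?_, ?_⟩
      · intro x y hgt
        have hxy : numOnes x < numOnes y := by
          by_contra hc
          push_neg at hc
          exact absurd (binPMF_mono_le_half hp0 hp1 (by linarith) hc) (not_le.mpr hgt)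
        exact GincE_mono n hxy
      · intro x
        exact itlE_le_inc N (GincE n x)
      · intro ρ hρ
        have hPnn : ∀ x, 0 ≤ binPMF n p x := by
          intro x
          exact mul_nonneg (pow_nonneg hp0 _) (pow_nonneg (by linarith) _)
        by_cases hp : p = 0
        · refine sum_log_bound _ hPnn (fun _ => false) ?_ _ _
            (fun x => itlE_le_inc N (GincE n x)) ρ hρ
          have h0 : numOnes (fun _ : Fin n => false) = 0 := by simp [numOnes]
          unfold binPMF
          rw [h0, hp]
          norm_num
        · refine sum_log_bound _ hPnn (fun _ => true) ?_ _ _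
            (fun x => itlE_le_inc N (GincE n x)) ρ hρ
          have h1 : numOnes (fun _ : Fin n => true) = n := by simp [numOnes]
          unfold binPMF
          rw [h1]
          simp only [Nat.sub_self, pow_zero, mul_one]
          have : 0 < p := lt_of_le_of_ne hp0 (Ne.symm hp)
          positivity
    · -- p > 1/2 : use decreasing order
      refine ⟨(GincE n).trans Fin.revPerm, ?_, ?_, ?_⟩
      · intro x y hgt
        have hxy : numOnes y < numOnes x := by
          by_contra hc
          push_neg at hc
          exact absurd (binPMF_mono_ge_half hp0 hp1 (by linarith) hc) (not_le.mpr hgt)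
        show ((Fin.rev (GincE n x)) : ℕ) < ((Fin.rev (GincE n y)) : ℕ)
        have h1 : GincE n y < GincE n x := by
          rw [Fin.lt_def]; exact GincE_mono n hxy
        exact Fin.lt_def.mp (Fin.rev_lt_rev.mpr h1)
      · intro x
        have hdval : (((GincE n).trans Fin.revPerm) x : ℕ) = N - 1 - (GincE n x : ℕ) := by
          show ((Fin.rev (GincE n x)) : ℕ) = _
          rw [Fin.val_rev]
          have := (GincE n x).isLt
          omega
        rw [hdval]
        exact itlE_le_dec N (GincE n x)
      · intro ρ hρ
        have hPnn : ∀ x, 0 ≤ binPMF n p x := by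
          intro x
          exact mul_nonneg (pow_nonneg hp0 _) (pow_nonneg (by linarith) _)
        have hppos : 0 < p := by linarith
        refine sum_log_bound _ hPnn (fun _ => true) ?_ _ _ ?_ ρ hρ
        · have h1 : numOnes (fun _ : Fin n => true) = n := by simp [numOnes]
          unfold binPMF
          rw [h1]
          simp only [Nat.sub_self, pow_zero, mul_one]
          positivity
        · intro x
          have hdval : (((GincE n).trans Fin.revPerm) x : ℕ) = N - 1 - (GincE n x : ℕ) := by
            show ((Fin.rev (GincE n x)) : ℕ) = _
            rw [Fin.val_rev]
            have := (GincE n x).isLt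
            omega
          rw [hdval]
          exact itlE_le_dec N (GincE n x)
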